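/- arXiv:1909.09275 — 2 statements merged into one kernel-verified Lean document; each statement's English description precedes it below -/
import Mathlib

section
/- In the Euclidean plane, let P_i and P_{i+1} be distinct points, and let q₁, r₂ be points such that the segment from q₁ to r₂ crosses the line through P_i and P_{i+1} at a point c strictly between them, with |q₁ P_i| = |r₂ P_{i+1}| (the sides opposite angle c in triangles △q₁ c P_i and △r₂ c P_{i+1}), and with the angles at P_i and P_{i+1} supplementary (∠P_i = π − ∠P_{i+1}). Then Q₁ + R₂ ≤ 2P, where Q₁ = |c P_i| is the side opposite ∠q₁ in the first triangle, R₂ = |c P_{i+1}| is the side opposite ∠r₂ in the second triangle, and P is the common length of the sides opposite ∠P_i and ∠P_{i+1} (namely |q₁ c| = |c r₂|). -/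
open EuclideanGeometry

/-- Configuration from the proof that the over-under curve is a `1/n`-geodesic.
Two triangles `△ q₁ c pi` and `△ r₂ c pj` share the vertex `c`, which lies strictly
between `q₁` and `r₂` and strictly between `pi` and `pj`; the sides opposite the angle
at `c` have equal length (`dist q₁ pi = dist r₂ pj`) and the angles at `pi` and `pj`
are supplementary.  Then `Q₁ + R₂ ≤ Pi + Pj (= 2P)`, where `Q₁ = dist c pi`,
`R₂ = dist c pj` are the sides opposite `∠q₁`, `∠r₂`, and `Pi = dist q₁ c`,
`Pj = dist r₂ c` are the sides opposite the angles at `pi`, `pj`. -/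
theorem over_under_two_triangle_estimate
    (q₁ r₂ pi pj c : EuclideanSpace ℝ (Fin 2))
    (hqc : Sbtw ℝ q₁ c r₂) (hpc : Sbtw ℝ pi c pj)
    (hC : dist q₁ pi = dist r₂ pj)
    (hsupp : ∠ q₁ pi c = Real.pi - ∠ r₂ pj c) :
    dist c pi + dist c pj ≤ dist q₁ c + dist r₂ c := by
  have h1 : c -ᵥ q₁ ≠ 0 := by
    simpa [vsub_eq_sub, sub_eq_zero] using hqc.ne_left
  have h2 : r₂ -ᵥ c ≠ 0 := by
    simpa [vsub_eq_sub, sub_eq_zero] using hqc.ne_right.symm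
  have h3 : c -ᵥ pi ≠ 0 := by
    simpa [vsub_eq_sub, sub_eq_zero] using hpc.ne_left
  have h4 : pj -ᵥ c ≠ 0 := by
    simpa [vsub_eq_sub, sub_eq_zero] using hpc.ne_right.symm
  obtain ⟨a, b, ha, hb, hab⟩ := hqc.wbtw.sameRay_vsub.exists_pos h1 h2
  obtain ⟨a', b', ha', hb', hab'⟩ := hpc.wbtw.sameRay_vsub.exists_pos h3 h4
  set u := q₁ - c with hu
  set v := pi - c with hv
  set l := a / b with hldef
  set m := a' / b' with hmdef
  have hl : 0 < l := div_pos ha hb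
  have hm : 0 < m := div_pos ha' hb'
  have hr2 : r₂ - c = -(l • u) := by
    have h := congrArg (fun w => b⁻¹ • w) hab
    simp only [vsub_eq_sub, smul_smul] at h
    rw [inv_mul_cancel₀ hb.ne', one_smul] at h
    rw [← h, hu, hldef, ← smul_neg, neg_sub, div_eq_inv_mul]
  have hpj2 : pj - c = -(m • v) := by
    have h := congrArg (fun w => b'⁻¹ • w) hab'
    simp only [vsub_eq_sub, smul_smul] at h
    rw [inv_mul_cancel₀ hb'.ne', one_smul] at h
    rw [← h, hv, hmdef, ← smul_neg, neg_sub, div_eq_inv_mul]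
  have hu0 : u ≠ 0 := by
    rw [hu, sub_ne_zero]; exact hqc.ne_left.symm
  have hv0 : v ≠ 0 := by
    rw [hv, sub_ne_zero]; exact hpc.ne_left.symm
  have hvpos : 0 < ‖v‖ := norm_pos_iff.2 hv0
  -- distances
  have dcpi : dist c pi = ‖v‖ := by
    rw [dist_comm, dist_eq_norm]
  have dcpj : dist c pj = m * ‖v‖ := by
    rw [dist_comm, dist_eq_norm, hpj2, norm_neg, norm_smul, Real.norm_eq_abs,
      abs_of_pos hm]
  have dq1c : dist q₁ c = ‖u‖ := dist_eq_norm _ _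
  have dr2c : dist r₂ c = l * ‖u‖ := by
    rw [dist_eq_norm, hr2, norm_neg, norm_smul, Real.norm_eq_abs, abs_of_pos hl]
  rw [dcpi, dcpj, dq1c, dr2c]
  by_cases hCz : dist q₁ pi = 0
  · -- degenerate: q₁ = pi and r₂ = pj
    have e1 : q₁ = pi := by rwa [dist_eq_zero] at hCz
    have e2 : r₂ = pj := by rw [hC] at hCz; rwa [dist_eq_zero] at hCz
    have euv : u = v := by rw [hu, hv, e1]
    have elm : l • u = m • v := by
      have := hpj2; rw [← e2, hr2] at this
      exact neg_injective this
    rw [euv] at elm ⊢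
    have hlm : l = m := by
      have := congrArg (fun w => ‖w‖) elm
      simp only [norm_smul, Real.norm_eq_abs, abs_of_pos hl, abs_of_pos hm] at this
      exact mul_right_cancel₀ (ne_of_gt hvpos) this
    rw [hlm]
  · -- nondegenerate case
    have hq1pi : q₁ - pi = u - v := by rw [hu, hv]; abel
    have hr2pj : r₂ - pj = m • v - l • u := by
      have : r₂ - pj = (r₂ - c) - (pj - c) := by abel
      rw [this, hr2, hpj2]; abel
    have hcpi : c - pi = -v := by rw [hv]; abel
    have hcpj : c - pj = m • v := by
      have : c - pj = -(pj - c) := by abel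
      rw [this, hpj2, neg_neg]
    have hcos := congrArg Real.cos hsupp
    rw [Real.cos_pi_sub] at hcos
    rw [EuclideanGeometry.angle, EuclideanGeometry.angle,
      InnerProductGeometry.cos_angle, InnerProductGeometry.cos_angle] at hcos
    simp only [vsub_eq_sub] at hcos
    rw [hq1pi, hcpi, hr2pj, hcpj] at hcos
    have hCeq : ‖m • v - l • u‖ = ‖u - v‖ := by
      have h1' : dist q₁ pi = ‖u - v‖ := by rw [dist_eq_norm, hq1pi]
      have h2' : dist r₂ pj = ‖m • v - l • u‖ := by rw [dist_eq_norm, hr2pj]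
      rw [← h1', ← h2', hC]
    have hCpos : 0 < ‖u - v‖ := by
      rw [dist_eq_norm, hq1pi] at hCz
      exact lt_of_le_of_ne (norm_nonneg _) (Ne.symm hCz)
    rw [hCeq] at hcos
    have hiq : (inner ℝ (u - v) (-v) : ℝ) = ‖v‖ ^ 2 - inner ℝ u v := by
      rw [inner_neg_right, inner_sub_left, real_inner_self_eq_norm_sq]
      ring_nf
    have hir : (inner ℝ (m • v - l • u) (m • v) : ℝ)
        = m ^ 2 * ‖v‖ ^ 2 - l * m * inner ℝ u v := by
      rw [real_inner_smul_right, inner_sub_left, real_inner_smul_left,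
        real_inner_smul_left, real_inner_self_eq_norm_sq]
      ring
    rw [hiq, hir, norm_neg, norm_smul, Real.norm_eq_abs, abs_of_pos hm] at hcos
    set S : ℝ := inner ℝ u v with hS
    set C : ℝ := ‖u - v‖ with hCdef
    -- derive the key relation
    have key : (1 + m) * ‖v‖ ^ 2 = (1 + l) * S := by
      have hne : C * ‖v‖ * m ≠ 0 := by positivity
      apply mul_left_cancel₀ hne
      have hcos' : (‖v‖ ^ 2 - S) * (C * (m * ‖v‖))
          = -(m ^ 2 * ‖v‖ ^ 2 - l * m * S) * (C * ‖v‖) := by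
        rw [← neg_div] at hcos
        rw [div_eq_div_iff (by positivity) (by positivity)] at hcos
        linarith [hcos]
      linear_combination hcos'
    have hSle : S ≤ ‖u‖ * ‖v‖ := real_inner_le_norm u v
    have h1' : (1 + m) * ‖v‖ * ‖v‖ ≤ (1 + l) * ‖u‖ * ‖v‖ := by
      calc (1 + m) * ‖v‖ * ‖v‖ = (1 + m) * ‖v‖ ^ 2 := by ring
        _ = (1 + l) * S := key
        _ ≤ (1 + l) * (‖u‖ * ‖v‖) :=
            mul_le_mul_of_nonneg_left hSle (by positivity)
        _ = (1 + l) * ‖u‖ * ‖v‖ := by ring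
    have h2 : (1 + m) * ‖v‖ ≤ (1 + l) * ‖u‖ := le_of_mul_le_mul_right h1' hvpos
    linarith
end

section
/- The closed geodesic of direction (3,4) on the flat torus ℝ²/(6ℤ × 4ℤ) is a 1/4-geodesic: for any two parameters s, t with |s − t| ≤ L/4 = 2.5 (arc length), the torus distance between γ(s) and γ(t) equals |s − t|. -/
open Real

noncomputable def pt (a b : ℝ) : EuclideanSpace ℝ (Fin 2) :=
  (WithLp.equiv 2 (Fin 2 → ℝ)).symm ![a, b]

/-- Quotient distance on the flat torus `ℝ²/Λ`, `Λ` the lattice generated by `(6,0)`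
and `(0,4)`: `d([x],[y]) = min over λ ∈ Λ of |x − y − λ|`. -/
noncomputable def torusDist (x y : EuclideanSpace ℝ (Fin 2)) : ℝ :=
  sInf {d : ℝ | ∃ a b : ℤ, d = dist x (y + pt (6 * a) (4 * b))}

/-- Unit-speed line of direction `(3,4)` through the origin. -/
noncomputable def γ (t : ℝ) : EuclideanSpace ℝ (Fin 2) :=
  pt (3 * t / 5) (4 * t / 5)

/-! Write `u = s − t` and `v = γ 1 = (3/5, 4/5)`, a unit vector. For a lattice vector `λ`,
`‖u v − λ‖² = u² − 2u⟪v, λ⟫ + ‖λ‖²`, so translating by `λ` cannot shorten the segment as long as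
`2|u| |⟪v, λ⟫| ≤ ‖λ‖²`. For `λ = (6a, 4b)` and `|u| ≤ 5/2` this reduces to
`|18a + 16b| ≤ 36a² + 16b²`, which holds because `|n| ≤ n²` for every integer `n`. -/

open RealInnerProductSpace

theorem abs_le_norm_smul_sub {E : Type*} [NormedAddCommGroup E] [InnerProductSpace ℝ E]
    {v w : E} (hv : ‖v‖ = 1) {u : ℝ} (h : 2 * |u| * |⟪v, w⟫| ≤ ‖w‖ ^ 2) :
    |u| ≤ ‖u • v - w‖ := by
  have hsq : u ^ 2 ≤ ‖u • v - w‖ ^ 2 := by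
    have hcross : 2 * u * ⟪v, w⟫ ≤ 2 * |u| * |⟪v, w⟫| := by
      rw [mul_assoc, mul_assoc, ← abs_mul]
      exact mul_le_mul_of_nonneg_left (le_abs_self _) zero_le_two
    rw [norm_sub_sq_real, norm_smul, mul_pow, hv, real_inner_smul_left, Real.norm_eq_abs, sq_abs]
    linarith
  simpa using sq_le_sq.mp hsq

theorem Int.abs_le_sq (a : ℤ) : |a| ≤ a ^ 2 := by
  rw [← Int.natCast_natAbs]
  exact Int.natAbs_le_self_sq a

theorem Int.abs_mul_add_mul_le {p q : ℤ} (hp : 0 ≤ p) (hq : 0 ≤ q) (a b : ℤ) :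
    |p * a + q * b| ≤ p * a ^ 2 + q * b ^ 2 :=
  calc |p * a + q * b| ≤ |p * a| + |q * b| := abs_add_le _ _
    _ = p * |a| + q * |b| := by rw [abs_mul, abs_mul, abs_of_nonneg hp, abs_of_nonneg hq]
    _ ≤ p * a ^ 2 + q * b ^ 2 := by gcongr <;> exact Int.abs_le_sq _

theorem pt_zero : pt 0 0 = 0 := by
  ext i; fin_cases i <;> simp [pt]

theorem inner_pt_pt (a b c d : ℝ) : ⟪pt a b, pt c d⟫ = a * c + b * d := by
  simp [pt, PiLp.inner_apply, Fin.sum_univ_two, mul_comm]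

theorem norm_pt_sq (a b : ℝ) : ‖pt a b‖ ^ 2 = a ^ 2 + b ^ 2 := by
  rw [← real_inner_self_eq_norm_sq, inner_pt_pt]
  ring

theorem norm_γ_one : ‖γ 1‖ = 1 := by
  refine (sq_eq_sq₀ (norm_nonneg _) zero_le_one).mp ?_
  rw [γ, norm_pt_sq]
  norm_num

theorem γ_sub_γ (s t : ℝ) : γ s - γ t = (s - t) • γ 1 := by
  ext i; fin_cases i <;> simp [γ, pt] <;> ring

theorem dist_γ_γ_add (s t : ℝ) (w : EuclideanSpace ℝ (Fin 2)) :
    dist (γ s) (γ t + w) = ‖(s - t) • γ 1 - w‖ := by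
  rw [dist_eq_norm, ← sub_sub, γ_sub_γ]

theorem abs_inner_γ_one_lattice_le (a b : ℤ) :
    5 * |⟪γ 1, pt (6 * a) (4 * b)⟫| ≤ ‖pt (6 * a) (4 * b)‖ ^ 2 := by
  have h : |(18 * a + 16 * b : ℝ)| ≤ 18 * a ^ 2 + 16 * b ^ 2 := by
    exact_mod_cast Int.abs_mul_add_mul_le (by norm_num) (by norm_num) a b
  rw [γ, inner_pt_pt, norm_pt_sq]
  calc 5 * |3 * 1 / 5 * (6 * (a : ℝ)) + 4 * 1 / 5 * (4 * b)| = |(18 * a + 16 * b : ℝ)| := by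
        rw [show 3 * 1 / 5 * (6 * (a : ℝ)) + 4 * 1 / 5 * (4 * b) = (18 * a + 16 * b) / 5 by ring,
          abs_div, abs_of_pos (by norm_num : (0 : ℝ) < 5)]
        ring
    _ ≤ 18 * a ^ 2 + 16 * b ^ 2 := h
    _ ≤ (6 * a) ^ 2 + (4 * b) ^ 2 := by nlinarith [sq_nonneg (a : ℝ)]

/-- The closed geodesic of direction `(3,4)` and length `L = 10` on the flat torus
`ℝ²/(6ℤ × 4ℤ)` is a `1/4`-geodesic: for any two parameters `s, t` with
`|s − t| ≤ L/4 = 5/2`, the torus distance between `γ s` and `γ t` equals `|s − t|`. -/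
theorem torus_geodesic_is_quarter_geodesic :
    ∀ s t : ℝ, |s - t| ≤ 5 / 2 → torusDist (γ s) (γ t) = |s - t| := by
  intro s t hst
  refine IsLeast.csInf_eq ⟨⟨0, 0, ?_⟩, ?_⟩
  · rw [dist_γ_γ_add]
    simp [pt_zero, norm_smul, norm_γ_one]
  · rintro _ ⟨a, b, rfl⟩
    rw [dist_γ_γ_add]
    refine abs_le_norm_smul_sub norm_γ_one (le_trans ?_ (abs_inner_γ_one_lattice_le a b))
    exact mul_le_mul_of_nonneg_right (by linarith) (abs_nonneg _)
end
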